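/- For every morphism f : (Y,ψ) → (X,φ) of partitioned assemblies, the reindexing iR_f : iR(X,φ) → iR(Y,ψ) has a right adjoint ∀_f, given on (g : (Y',ψ') → (Y,ψ), α) by the first projection from the partitioned assembly E := {(x,k,e) : x ∈ X, e realizes a section k of g over the fibre f⁻¹(x)} with realizer map (x,k,e) ↦ ⟨φ(x),e⟩ and predicate ᾱ(x,k,e) := ⋃_{y ∈ f⁻¹(x)} {ψ(y)} ⊗ α(k(y)). -/
import Mathlib


/-- A partial combinatory algebra: a set with a partial binary application
and combinators `k`, `s` satisfying the usual axioms. -/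
structure PCA where
  A : Type
  app : A → A → Part A
  k : A
  s : A
  k_spec : ∀ a b : A, (app k a).bind (fun x => app x b) = Part.some a
  s_total : ∀ a b : A, ((app s a).bind (fun x => app x b)).Dom
  s_spec : ∀ a b c : A,
    (((app s a).bind (fun x => app x b)).bind (fun x => app x c)) =
      (app a c).bind (fun x => (app b c).bind (fun y => app x y))

namespace PCA

/-- Application extended to partial elements (Kleene application). -/
def papp (P : PCA) (x y : Part P.A) : Part P.A :=
  x.bind fun a => y.bind fun b => P.app a b

end PCA
/-- An elementary sub-PCA: a subset containing suitable combinators `k`, `s`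
(working for the whole PCA) and closed under application. -/
structure SubPCA (P : PCA) where
  mem : P.A → Prop
  k' : P.A
  s' : P.A
  k'_mem : mem k'
  s'_mem : mem s'
  k'_spec : ∀ a b : P.A, P.papp (P.app k' a) (Part.some b) = Part.some a
  s'_total : ∀ a b : P.A, (P.papp (P.app s' a) (Part.some b)).Dom
  s'_spec : ∀ a b c : P.A,
    P.papp (P.papp (P.app s' a) (Part.some b)) (Part.some c) =
      P.papp (P.app a c) (P.app b c)
  closed : ∀ a b c : P.A, mem a → mem b → P.app a b = Part.some c → mem c
/-- Pairing and projection combinators, lying in the sub-PCA, together with the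
induced total coding function `code a b = ⟨a,b⟩`. -/
structure Pairing (P : PCA) (S : SubPCA P) where
  pair : P.A
  p1 : P.A
  p2 : P.A
  pair_mem : S.mem pair
  p1_mem : S.mem p1
  p2_mem : S.mem p2
  code : P.A → P.A → P.A
  code_spec : ∀ a b : P.A, P.papp (P.app pair a) (Part.some b) = Part.some (code a b)
  p1_spec : ∀ a b : P.A, P.app p1 (code a b) = Part.some a
  p2_spec : ∀ a b : P.A, P.app p2 (code a b) = Part.some b

-- basic papp lemmas
@[simp] lemma papp_some_some (P : PCA) (a b : P.A) :
    P.papp (Part.some a) (Part.some b) = P.app a b := by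
  simp [PCA.papp]

lemma papp_some_right (P : PCA) (x : Part P.A) (b : P.A) :
    P.papp x (Part.some b) = x.bind (fun a => P.app a b) := by
  simp [PCA.papp]

-- k' application is defined, with constant-function behaviour
lemma k'_app (P : PCA) (S : SubPCA P) (a : P.A) :
    ∃ v, P.app S.k' a = Part.some v ∧ ∀ b, P.app v b = Part.some a := by
  have h := S.k'_spec a a
  rw [papp_some_right] at h
  have hmem := Part.eq_some_iff.mp h
  rcases Part.mem_bind_iff.mp hmem with ⟨v, hv, _⟩
  have hv' : P.app S.k' a = Part.some v := Part.eq_some_iff.mpr hv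
  refine ⟨v, hv', fun b => ?_⟩
  have h' := S.k'_spec a b
  rw [papp_some_right, hv', Part.bind_some] at h'
  exact h'

lemma s'_app (P : PCA) (S : SubPCA P) (a b : P.A) :
    ∃ v w, P.app S.s' a = Part.some v ∧ P.app v b = Part.some w ∧
      ∀ c, P.app w c = P.papp (P.app a c) (P.app b c) := by
  have ht := S.s'_total a b
  rw [papp_some_right] at ht
  rcases Part.dom_iff_mem.mp ht with ⟨w, hw⟩
  rcases Part.mem_bind_iff.mp hw with ⟨v, hv, hw'⟩
  have hv' : P.app S.s' a = Part.some v := Part.eq_some_iff.mpr hv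
  have hw'' : P.app v b = Part.some w := Part.eq_some_iff.mpr hw'
  refine ⟨v, w, hv', hw'', fun c => ?_⟩
  have h := S.s'_spec a b c
  rw [papp_some_right, hv', papp_some_some, hw'', Part.bind_some] at h
  exact h

-- Term language for bracket abstraction
inductive Expr (P : PCA) : ℕ → Type where
  | var : ∀ {n}, Fin n → Expr P n
  | const : ∀ {n}, P.A → Expr P n
  | app : ∀ {n}, Expr P n → Expr P n → Expr P n

namespace Expr

def eval {P : PCA} : ∀ {n}, Expr P n → (Fin n → P.A) → Part P.A
  | _, var i, ρ => Part.some (ρ i)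
  | _, const a, _ => Part.some a
  | _, app e₁ e₂, ρ => P.papp (e₁.eval ρ) (e₂.eval ρ)

def good {P : PCA} (S : SubPCA P) : ∀ {n}, Expr P n → Prop
  | _, var _ => True
  | _, const a => S.mem a
  | _, app e₁ e₂ => good S e₁ ∧ good S e₂

def abs {P : PCA} (S : SubPCA P) : ∀ {n}, Expr P (n + 1) → Expr P n
  | _, var i =>
      Fin.cases (app (app (const S.s') (const S.k')) (const S.k'))
        (fun j => app (const S.k') (var j)) i
  | _, const a => app (const S.k') (const a)
  | _, app e₁ e₂ => app (app (const S.s') (abs S e₁)) (abs S e₂)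

lemma eval_abs_dom {P : PCA} (S : SubPCA P) :
    ∀ {n} (e : Expr P (n + 1)) (ρ : Fin n → P.A), ∃ v, (abs S e).eval ρ = Part.some v := by
  intro n e ρ
  induction e with
  | var i =>
      refine Fin.cases ?_ (fun j => ?_) i
      · rcases s'_app P S S.k' S.k' with ⟨v, w, hv, hw, _⟩
        exact ⟨w, by simp [abs, eval, hv, hw]⟩
      · rcases k'_app P S (ρ j) with ⟨v, hv, _⟩
        exact ⟨v, by simp [abs, eval, hv]⟩
  | const a =>
      rcases k'_app P S a with ⟨v, hv, _⟩
      exact ⟨v, by simp [abs, eval, hv]⟩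
  | app e₁ e₂ ih₁ ih₂ =>
      rcases ih₁ with ⟨v₁, hv₁⟩
      rcases ih₂ with ⟨v₂, hv₂⟩
      rcases s'_app P S v₁ v₂ with ⟨v, w, hv, hw, _⟩
      exact ⟨w, by simp [abs, eval, hv₁, hv₂, hv, hw]⟩

lemma abs_spec {P : PCA} (S : SubPCA P) :
    ∀ {n} (e : Expr P (n + 1)) (ρ : Fin n → P.A) (a : P.A),
      P.papp ((abs S e).eval ρ) (Part.some a) = e.eval (Fin.cons a ρ) := by
  intro n e ρ a
  induction e with
  | var i =>
      refine Fin.cases ?_ (fun j => ?_) i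
      · rcases s'_app P S S.k' S.k' with ⟨v, w, hv, hw, hspec⟩
        rcases k'_app P S a with ⟨u, hu, hu'⟩
        simp [abs, eval, hv, hw, hspec, hu, hu']
      · rcases k'_app P S (ρ j) with ⟨v, hv, hv'⟩
        simp [abs, eval, hv, hv']
  | const c =>
      rcases k'_app P S c with ⟨v, hv, hv'⟩
      simp [abs, eval, hv, hv']
  | app e₁ e₂ ih₁ ih₂ =>
      rcases eval_abs_dom S e₁ ρ with ⟨v₁, hv₁⟩
      rcases eval_abs_dom S e₂ ρ with ⟨v₂, hv₂⟩
      rcases s'_app P S v₁ v₂ with ⟨v, w, hv, hw, hspec⟩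
      rw [hv₁] at ih₁; rw [hv₂] at ih₂
      simp only [papp_some_some] at ih₁ ih₂
      simp [abs, eval, hv₁, hv₂, hv, hw, hspec, ih₁, ih₂]

lemma good_abs {P : PCA} (S : SubPCA P) :
    ∀ {n} (e : Expr P (n + 1)), good S e → good S (abs S e) := by
  intro n e
  induction e with
  | var i =>
      refine Fin.cases ?_ (fun j => ?_) i <;> intro _ <;>
        simp [abs, good, S.k'_mem, S.s'_mem]
  | const a =>
      intro he
      simp [good] at he
      simp [abs, good, S.k'_mem, he]
  | app e₁ e₂ ih₁ ih₂ =>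
      intro he
      simp [good] at he ⊢
      simp [abs, good, S.s'_mem]
      exact ⟨ih₁ he.1, ih₂ he.2⟩

lemma eval_good {P : PCA} (S : SubPCA P) :
    ∀ {n} (e : Expr P n) (ρ : Fin n → P.A), good S e → (∀ i, S.mem (ρ i)) →
      ∀ v, e.eval ρ = Part.some v → S.mem v := by
  intro n e
  induction e with
  | var i => intro ρ _ hρ v hv; simp [eval] at hv; exact hv ▸ hρ i
  | const a => intro ρ he _ v hv; simp [eval, good] at hv he; exact hv ▸ he
  | app e₁ e₂ ih₁ ih₂ =>
      intro ρ he hρ v hv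
      simp [good] at he
      simp only [eval, PCA.papp] at hv
      have hmem := Part.eq_some_iff.mp hv
      rcases Part.mem_bind_iff.mp hmem with ⟨a, ha, hrest⟩
      rcases Part.mem_bind_iff.mp hrest with ⟨b, hb, hab⟩
      exact S.closed a b v (ih₁ ρ he.1 hρ a (Part.eq_some_iff.mpr ha))
        (ih₂ ρ he.2 hρ b (Part.eq_some_iff.mpr hb)) (Part.eq_some_iff.mpr hab)

end Expr

lemma abs1 {P : PCA} (S : SubPCA P) (e : Expr P 1) (he : Expr.good S e) :
    ∃ v, S.mem v ∧ ∀ a, P.app v a = e.eval ![a] := by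
  rcases Expr.eval_abs_dom S e ![] with ⟨v, hv⟩
  refine ⟨v, Expr.eval_good S (Expr.abs S e) ![] (Expr.good_abs S e he)
    (fun i => i.elim0) v hv, fun a => ?_⟩
  have h := Expr.abs_spec S e ![] a
  rw [hv, papp_some_some] at h
  exact h

lemma abs2 {P : PCA} (S : SubPCA P) (e : Expr P 2) (he : Expr.good S e) :
    ∃ v, S.mem v ∧ ∀ a, ∃ u, P.app v a = Part.some u ∧
      ∀ b, P.app u b = e.eval ![b, a] := by
  rcases abs1 S (Expr.abs S e) (Expr.good_abs S e he) with ⟨v, hvS, hv⟩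
  refine ⟨v, hvS, fun a => ?_⟩
  rcases Expr.eval_abs_dom S e ![a] with ⟨u, hu⟩
  refine ⟨u, by rw [hv a]; exact hu, fun b => ?_⟩
  have h := Expr.abs_spec S e ![a] b
  rw [hu, papp_some_some] at h
  exact h

/-- An element of the fibre `iR(X,φ)` of the instance reducibility doctrine:
a partitioned assembly `(Y,ψ)`, an `A'`-realized map `f : (Y,ψ) → (X,φ)` of
partitioned assemblies, and a predicate `α : Y → 𝒫(A)`. -/
structure IRObj (P : PCA) (S : SubPCA P) (X : Type) (φ : X → P.A) where
  Y : Type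
  ψ : Y → P.A
  f : Y → X
  hf : ∃ r : P.A, S.mem r ∧ ∀ y : Y, P.app r (ψ y) = Part.some (φ (f y))
  α : Y → Set P.A

/-- The order on the fibre `iR(X,φ)`: `(f,α) ≤ (g,β)` iff there is a morphism
`h` of partitioned assemblies with `g ∘ h = f` and some `ℓ ∈ A'` with
`ℓ·⟨ψ(y),q⟩ ∈ α(y)` for all `y` and all `q ∈ β(h(y))`. -/
def IRle (P : PCA) (S : SubPCA P) (Q : Pairing P S) {X : Type} {φ : X → P.A}
    (u v : IRObj P S X φ) : Prop :=
  ∃ h : u.Y → v.Y,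
    (∃ r : P.A, S.mem r ∧ ∀ y : u.Y, P.app r (u.ψ y) = Part.some (v.ψ (h y))) ∧
    (∀ y : u.Y, v.f (h y) = u.f y) ∧
    ∃ l : P.A, S.mem l ∧
      ∀ y : u.Y, ∀ q ∈ v.α (h y), ∃ c ∈ u.α y, P.app l (Q.code (u.ψ y) q) = Part.some c

/-- A morphism of partitioned assemblies `(Y,ψ) → (X,φ)`: a function realized
by an element of the sub-PCA `A'`. -/
structure PAMor (P : PCA) (S : SubPCA P) (Y : Type) (ψ : Y → P.A)
    (X : Type) (φ : X → P.A) where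
  toFun : Y → X
  realized : ∃ r : P.A, S.mem r ∧ ∀ y : Y, P.app r (ψ y) = Part.some (φ (toFun y))

/-- Reindexing `iR_F : iR(X,φ) → iR(Y,ψ)` of the instance reducibility
doctrine, computed by pullback in partitioned assemblies. -/
def irReindex (P : PCA) (S : SubPCA P) (Q : Pairing P S)
    {Y : Type} {ψ : Y → P.A} {X : Type} {φ : X → P.A}
    (F : PAMor P S Y ψ X φ) (w : IRObj P S X φ) : IRObj P S Y ψ where
  Y := {p : Y × w.Y // F.toFun p.1 = w.f p.2}
  ψ := fun p => Q.code (ψ p.val.1) (w.ψ p.val.2)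
  f := fun p => p.val.1
  hf := ⟨Q.p1, Q.p1_mem, fun p => Q.p1_spec _ _⟩
  α := fun p => w.α p.val.2

/-- The candidate right adjoint `∀_F` of reindexing: the first projection from
the partitioned assembly `E` of triples `(x, k, e)` where `e` realizes a
section `k` of `g` over the fibre `F⁻¹(x)`, with realizer map
`(x,k,e) ↦ ⟨φ(x),e⟩` and predicate `ᾱ(x,k,e) = ⋃_{y ∈ F⁻¹(x)} {ψ(y)} ⊗ α(k(y))`. -/
def irForall (P : PCA) (S : SubPCA P) (Q : Pairing P S)
    {Y : Type} {ψ : Y → P.A} {X : Type} {φ : X → P.A}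
    (F : PAMor P S Y ψ X φ) (g : IRObj P S Y ψ) : IRObj P S X φ where
  Y := Σ x : X, {ke : ({y : Y // F.toFun y = x} → g.Y) × P.A //
        (∀ y : {y : Y // F.toFun y = x}, g.f (ke.1 y) = y.val) ∧
        ∀ y : {y : Y // F.toFun y = x},
          P.app ke.2 (ψ y.val) = Part.some (g.ψ (ke.1 y))}
  ψ := fun p => Q.code (φ p.1) p.2.val.2
  f := fun p => p.1
  hf := ⟨Q.p1, Q.p1_mem, fun p => Q.p1_spec _ _⟩
  α := fun p => {c | ∃ y : {y : Y // F.toFun y = p.1},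
        ∃ t ∈ g.α (p.2.val.1 y), c = Q.code (ψ y.val) t}

/-- For every morphism `F : (Y,ψ) → (X,φ)` of partitioned assemblies, the
reindexing `iR_F` has a right adjoint `∀_F` given by the explicit construction
above: `iR_F(h,γ) ≤ (g,α)` in `iR(Y,ψ)` iff `(h,γ) ≤ ∀_F(g,α)` in `iR(X,φ)`. -/
theorem irForall_right_adjoint (P : PCA) (S : SubPCA P) (Q : Pairing P S)
    {Y : Type} {ψ : Y → P.A} {X : Type} {φ : X → P.A}
    (F : PAMor P S Y ψ X φ) (g : IRObj P S Y ψ) (w : IRObj P S X φ) :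
    IRle P S Q (irReindex P S Q F w) g ↔ IRle P S Q w (irForall P S Q F g) := by
  constructor
  · rintro ⟨h, ⟨r, hrS, hr⟩, hcomm, l, hlS, hl⟩
    obtain ⟨rw_, hrwS, hrw⟩ := w.hf
    -- the curried realizer d : λ b a. r ⟨a, b⟩
    obtain ⟨d, hdS, hd⟩ := abs2 S
      (Expr.app (.const r) (.app (.app (.const Q.pair) (.var 0)) (.var 1)))
      (by simp [Expr.good, hrS, Q.pair_mem])
    choose u hu hu' using hd
    have hdval : ∀ a b, P.app (u a) b = P.app r (Q.code b a) := by
      intro a b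
      rw [hu' a b]
      simp [Expr.eval, Q.code_spec]
    -- the map H into the forall object
    refine ⟨fun z => ⟨w.f z,
      ⟨(fun y => h ⟨(y.val, z), y.prop⟩, u (w.ψ z)),
        fun y => hcomm ⟨(y.val, z), y.prop⟩,
        fun y => by rw [hdval]; exact hr ⟨(y.val, z), y.prop⟩⟩⟩, ?_, fun z => rfl, ?_⟩
    · -- realizer R' : λ b. ⟨rw_ b, d b⟩
      obtain ⟨R', hR'S, hR'⟩ := abs1 S
        (Expr.app (.app (.const Q.pair) (.app (.const rw_) (.var 0)))
          (.app (.const d) (.var 0)))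
        (by simp [Expr.good, Q.pair_mem, hrwS, hdS])
      refine ⟨R', hR'S, fun z => ?_⟩
      rw [hR']
      simp [Expr.eval, hrw, hu, Q.code_spec, irForall]
    · -- realizer L : λ m. l ⟨⟨p1 (p2 m), p1 m⟩, p2 (p2 m)⟩
      obtain ⟨L, hLS, hLe⟩ := abs1 S
        (Expr.app (.const l)
          (.app (.app (.const Q.pair)
            (.app (.app (.const Q.pair)
              (.app (.const Q.p1) (.app (.const Q.p2) (.var 0))))
              (.app (.const Q.p1) (.var 0))))
            (.app (.const Q.p2) (.app (.const Q.p2) (.var 0)))))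
        (by simp [Expr.good, hlS, Q.pair_mem, Q.p1_mem, Q.p2_mem])
      have hLval : ∀ a b t, P.app L (Q.code b (Q.code a t)) =
          P.app l (Q.code (Q.code a b) t) := by
        intro a b t
        rw [hLe]
        simp [Expr.eval, Q.p1_spec, Q.p2_spec, Q.code_spec]
      refine ⟨L, hLS, fun z q hq => ?_⟩
      rcases hq with ⟨y, t, ht, rfl⟩
      obtain ⟨c, hc, hlc⟩ := hl ⟨(y.val, z), y.prop⟩ t ht
      exact ⟨c, hc, by rw [hLval]; exact hlc⟩
  · rintro ⟨H, ⟨R, hRS, hR⟩, hHf, L, hLS, hL⟩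
    refine ⟨fun p => (H p.val.2).2.val.1 ⟨p.val.1, p.prop.trans (hHf p.val.2).symm⟩,
      ?_, fun p => (H p.val.2).2.prop.1 ⟨p.val.1, p.prop.trans (hHf p.val.2).symm⟩, ?_⟩
    · -- realizer r' : λ m. (p2 (R (p2 m))) (p1 m)
      obtain ⟨r', hr'S, hr'⟩ := abs1 S
        (Expr.app (.app (.const Q.p2) (.app (.const R) (.app (.const Q.p2) (.var 0))))
          (.app (.const Q.p1) (.var 0)))
        (by simp [Expr.good, Q.p1_mem, Q.p2_mem, hRS])
      refine ⟨r', hr'S, fun p => ?_⟩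
      have hsec := (H p.val.2).2.prop.2 ⟨p.val.1, p.prop.trans (hHf p.val.2).symm⟩
      rw [hr']
      simp only [Expr.eval, Matrix.cons_val_zero, papp_some_some, irReindex,
        Q.p1_spec, Q.p2_spec, hR, irForall, papp_some_some]
      simpa using hsec
    · -- realizer l' : λ m. L ⟨p2 (p1 m), ⟨p1 (p1 m), p2 m⟩⟩
      obtain ⟨l', hl'S, hl'⟩ := abs1 S
        (Expr.app (.const L)
          (.app (.app (.const Q.pair)
            (.app (.const Q.p2) (.app (.const Q.p1) (.var 0))))
            (.app (.app (.const Q.pair)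
              (.app (.const Q.p1) (.app (.const Q.p1) (.var 0))))
              (.app (.const Q.p2) (.var 0)))))
        (by simp [Expr.good, hLS, Q.pair_mem, Q.p1_mem, Q.p2_mem])
      have hl'val : ∀ a b t, P.app l' (Q.code (Q.code a b) t) =
          P.app L (Q.code b (Q.code a t)) := by
        intro a b t
        rw [hl']
        simp [Expr.eval, Q.p1_spec, Q.p2_spec, Q.code_spec]
      refine ⟨l', hl'S, fun p t ht => ?_⟩
      obtain ⟨c, hc, hLc⟩ := hL p.val.2 (Q.code (ψ p.val.1) t)
        ⟨⟨p.val.1, p.prop.trans (hHf p.val.2).symm⟩, t, ht, rfl⟩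
      exact ⟨c, hc, by
        rw [show (irReindex P S Q F w).ψ p = Q.code (ψ p.val.1) (w.ψ p.val.2) from rfl,
          hl'val]
        exact hLc⟩
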